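/- A pair (x*,y*) ∈ Δ_m×Δ_n is a stationary point if and only if f_R(x*,y*) = f_C(x*,y*) and there exist ρ* ∈ [0,1], w* ∈ Δ_m with supp(w*) ⊆ S_R(y*), and z* ∈ Δ_n with supp(z*) ⊆ S_C(x*) such that supp(x*) ⊆ suppmin(A(ρ*,y*,z*)) and supp(y*) ⊆ suppmin(B(ρ*,x*,w*)). -/

import Mathlib

open scoped BigOperators Classical
open Matrix Filter

noncomputable section

namespace TS

/-- The probability simplex in `ℝ^k`. -/
def Δ (k : ℕ) : Set (Fin k → ℝ) := {x | (∀ i, 0 ≤ x i) ∧ ∑ i, x i = 1}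

/-- Maximum entry of a vector. -/
def vmax {k : ℕ} (u : Fin k → ℝ) : ℝ := ⨆ i, u i

/-- Maximum entry of a vector over an index set. -/
def vmaxOn {k : ℕ} (S : Set (Fin k)) (u : Fin k → ℝ) : ℝ := ⨆ i ∈ S, u i

/-- The support of a vector: indices with positive entries. -/
def supp {k : ℕ} (u : Fin k → ℝ) : Set (Fin k) := {i | 0 < u i}

/-- The set of indices where `u` attains its maximum entry. -/
def suppmax {k : ℕ} (u : Fin k → ℝ) : Set (Fin k) := {i | ∀ j, u j ≤ u i}

/-- The set of indices where `u` attains its minimum entry. -/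
def suppmin {k : ℕ} (u : Fin k → ℝ) : Set (Fin k) := {i | ∀ j, u i ≤ u j}

variable {m n : ℕ}

/-- `f_R(x,y) = max(Ry) − xᵀRy`. -/
def fR (R : Matrix (Fin m) (Fin n) ℝ) (x : Fin m → ℝ) (y : Fin n → ℝ) : ℝ :=
  vmax (R.mulVec y) - x ⬝ᵥ R.mulVec y

/-- `f_C(x,y) = max(Cᵀx) − xᵀCy`. -/
def fC (C : Matrix (Fin m) (Fin n) ℝ) (x : Fin m → ℝ) (y : Fin n → ℝ) : ℝ :=
  vmax (Matrix.vecMul x C) - x ⬝ᵥ C.mulVec y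

/-- `f(x,y) = max{f_R(x,y), f_C(x,y)}`. -/
def fNE (R C : Matrix (Fin m) (Fin n) ℝ) (x : Fin m → ℝ) (y : Fin n → ℝ) : ℝ :=
  max (fR R x y) (fC C x y)

/-- `S_R(y) = suppmax(Ry)`. -/
def SR (R : Matrix (Fin m) (Fin n) ℝ) (y : Fin n → ℝ) : Set (Fin m) := suppmax (R.mulVec y)

/-- `S_C(x) = suppmax(Cᵀx)`. -/
def SC (C : Matrix (Fin m) (Fin n) ℝ) (x : Fin m → ℝ) : Set (Fin n) := suppmax (Matrix.vecMul x C)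

/-- `g` has right (one-sided) derivative `d` at `0`: `lim_{θ→0⁺} (g θ − g 0)/θ = d`. -/
def HasPosDeriv (g : ℝ → ℝ) (d : ℝ) : Prop :=
  Tendsto (fun θ : ℝ => (g θ - g 0) / θ) (nhdsWithin 0 (Set.Ioi 0)) (nhds d)

/-- `(x,y)` is a stationary point: for every `(x',y')` in the product simplex, the scaled
directional derivative `Df(x,y,x',y')` of `f` exists and is nonnegative. -/
def IsStationary (R C : Matrix (Fin m) (Fin n) ℝ) (x : Fin m → ℝ) (y : Fin n → ℝ) : Prop :=
  ∀ x' ∈ Δ m, ∀ y' ∈ Δ n, ∃ d : ℝ,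
    HasPosDeriv (fun θ : ℝ => fNE R C (x + θ • (x' - x)) (y + θ • (y' - y))) d ∧ 0 ≤ d

/-- The function `T(x,y,x',y',ρ,w,z)`. -/
def Tfun (R C : Matrix (Fin m) (Fin n) ℝ) (x : Fin m → ℝ) (y : Fin n → ℝ)
    (x' : Fin m → ℝ) (y' : Fin n → ℝ) (ρ : ℝ) (w : Fin m → ℝ) (z : Fin n → ℝ) : ℝ :=
  ρ * (w ⬝ᵥ R.mulVec y' - x ⬝ᵥ R.mulVec y' - x' ⬝ᵥ R.mulVec y + x ⬝ᵥ R.mulVec y)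
    + (1 - ρ) * (x' ⬝ᵥ C.mulVec z - x ⬝ᵥ C.mulVec y' - x' ⬝ᵥ C.mulVec y + x ⬝ᵥ C.mulVec y)

/-- Feasibility for the tuple `(ρ,w,z)`: `ρ ∈ [0,1]`, `w ∈ Δ_m` with `supp w ⊆ S_R(y)`,
`z ∈ Δ_n` with `supp z ⊆ S_C(x)`. -/
def dualFeasible (R C : Matrix (Fin m) (Fin n) ℝ) (x : Fin m → ℝ) (y : Fin n → ℝ)
    (ρ : ℝ) (w : Fin m → ℝ) (z : Fin n → ℝ) : Prop :=
  ρ ∈ Set.Icc (0:ℝ) 1 ∧ w ∈ Δ m ∧ supp w ⊆ SR R y ∧ z ∈ Δ n ∧ supp z ⊆ SC C x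

/-- `max_{ρ,w,z} T(x,y,x',y',ρ,w,z)` over feasible `(ρ,w,z)`. -/
def innerMax (R C : Matrix (Fin m) (Fin n) ℝ) (x : Fin m → ℝ) (y : Fin n → ℝ)
    (x' : Fin m → ℝ) (y' : Fin n → ℝ) : ℝ :=
  sSup {t : ℝ | ∃ ρ w z, dualFeasible R C x y ρ w z ∧ t = Tfun R C x y x' y' ρ w z}

/-- `V(x,y) = min_{(x',y') ∈ Δ_m×Δ_n} max_{ρ,w,z} T(x,y,x',y',ρ,w,z)`. -/
def Vval (R C : Matrix (Fin m) (Fin n) ℝ) (x : Fin m → ℝ) (y : Fin n → ℝ) : ℝ :=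
  sInf {t : ℝ | ∃ x' ∈ Δ m, ∃ y' ∈ Δ n, t = innerMax R C x y x' y'}

/-- `min_{(x',y') ∈ Δ_m×Δ_n} T(x,y,x',y',ρ,w,z)`. -/
def innerMin (R C : Matrix (Fin m) (Fin n) ℝ) (x : Fin m → ℝ) (y : Fin n → ℝ)
    (ρ : ℝ) (w : Fin m → ℝ) (z : Fin n → ℝ) : ℝ :=
  sInf {t : ℝ | ∃ x' ∈ Δ m, ∃ y' ∈ Δ n, t = Tfun R C x y x' y' ρ w z}

/-- `(ρ,w,z)` is a dual solution at `(x,y)`. -/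
def IsDualSolution (R C : Matrix (Fin m) (Fin n) ℝ) (x : Fin m → ℝ) (y : Fin n → ℝ)
    (ρ : ℝ) (w : Fin m → ℝ) (z : Fin n → ℝ) : Prop :=
  dualFeasible R C x y ρ w z ∧ Vval R C x y = innerMin R C x y ρ w z

/-- `(x,y)` is an `ε`-approximate Nash equilibrium. -/
def IsEpsNash (R C : Matrix (Fin m) (Fin n) ℝ) (x : Fin m → ℝ) (y : Fin n → ℝ) (ε : ℝ) : Prop :=
  (∀ x' ∈ Δ m, x' ⬝ᵥ R.mulVec y ≤ x ⬝ᵥ R.mulVec y + ε) ∧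
  (∀ y' ∈ Δ n, x ⬝ᵥ C.mulVec y' ≤ x ⬝ᵥ C.mulVec y + ε)

/-- A Nash equilibrium is a `0`-approximate Nash equilibrium. -/
def IsNash (R C : Matrix (Fin m) (Fin n) ℝ) (x : Fin m → ℝ) (y : Fin n → ℝ) : Prop :=
  IsEpsNash R C x y 0

/-- `λ* = (w*−x*)ᵀRz*`. -/
def lamStar (R : Matrix (Fin m) (Fin n) ℝ) (xs ws : Fin m → ℝ) (zs : Fin n → ℝ) : ℝ :=
  (ws - xs) ⬝ᵥ R.mulVec zs

/-- `μ* = w*ᵀC(z*−y*)`. -/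
def muStar (C : Matrix (Fin m) (Fin n) ℝ) (ws : Fin m → ℝ) (ys zs : Fin n → ℝ) : ℝ :=
  ws ⬝ᵥ C.mulVec (zs - ys)

/-- `p* = f_R(x*,z*)/(f_R(x*,z*)+f_C(w*,z*)−f_R(w*,z*))` (`= 0` if the denominator is `0`,
by the real-division-by-zero convention). -/
def pstar (R C : Matrix (Fin m) (Fin n) ℝ) (xs ws : Fin m → ℝ) (zs : Fin n → ℝ) : ℝ :=
  fR R xs zs / (fR R xs zs + fC C ws zs - fR R ws zs)

/-- `q* = f_C(w*,y*)/(f_C(w*,y*)+f_R(w*,z*)−f_C(w*,z*))` (`= 0` if the denominator is `0`). -/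
def qstar (R C : Matrix (Fin m) (Fin n) ℝ) (ws : Fin m → ℝ) (ys zs : Fin n → ℝ) : ℝ :=
  fC C ws ys / (fC C ws ys + fR R ws zs - fC C ws zs)

/-- The adjusted pair `(ũ,ṽ)` of Method 3. -/
def tildeUV (R C : Matrix (Fin m) (Fin n) ℝ) (xs : Fin m → ℝ) (ys : Fin n → ℝ)
    (ws : Fin m → ℝ) (zs : Fin n → ℝ) : (Fin m → ℝ) × (Fin n → ℝ) :=
  if fR R ws zs ≤ fC C ws zs then
    (pstar R C xs ws zs • ws + (1 - pstar R C xs ws zs) • xs, zs)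
  else
    (ws, qstar R C ws ys zs • zs + (1 - qstar R C ws ys zs) • ys)

/-- `A(ρ,y,z) = −ρ·Ry + (1−ρ)·C(z−y) ∈ ℝ^m`. -/
def Avec (R C : Matrix (Fin m) (Fin n) ℝ) (ρ : ℝ) (y z : Fin n → ℝ) : Fin m → ℝ :=
  (-ρ) • R.mulVec y + (1 - ρ) • (C.mulVec z - C.mulVec y)

/-- `B(ρ,x,w) = ρ·Rᵀ(w−x) − (1−ρ)·Cᵀx ∈ ℝ^n`. -/
def Bvec (R C : Matrix (Fin m) (Fin n) ℝ) (ρ : ℝ) (x w : Fin m → ℝ) : Fin n → ℝ :=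
  ρ • (Matrix.vecMul w R - Matrix.vecMul x R) - (1 - ρ) • Matrix.vecMul x C


-- basic vmax lemmas
lemma le_vmax {k : ℕ} (u : Fin (k+1) → ℝ) (j : Fin (k+1)) : u j ≤ vmax u :=
  le_ciSup (Set.Finite.bddAbove (Set.finite_range u)) j

lemma exists_suppmax {k : ℕ} (u : Fin (k+1) → ℝ) : ∃ i, i ∈ suppmax u := by
  obtain ⟨i, hi⟩ := Finite.exists_max u
  exact ⟨i, hi⟩

lemma vmax_eq {k : ℕ} {u : Fin (k+1) → ℝ} {i : Fin (k+1)} (hi : i ∈ suppmax u) :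
    vmax u = u i :=
  le_antisymm (ciSup_le hi) (le_vmax u i)

lemma dot_le_vmax {k : ℕ} {x u : Fin (k+1) → ℝ} (hx : x ∈ Δ (k+1)) :
    x ⬝ᵥ u ≤ vmax u := by
  calc x ⬝ᵥ u = ∑ i, x i * u i := rfl
    _ ≤ ∑ i, x i * vmax u :=
        Finset.sum_le_sum fun i _ => mul_le_mul_of_nonneg_left (le_vmax u i) (hx.1 i)
    _ = vmax u := by rw [← Finset.sum_mul, hx.2, one_mul]

-- argmax over a nonempty finite subset
lemma exists_argmax_on {k : ℕ} (S : Set (Fin (k+1))) (hS : S.Nonempty) (v : Fin (k+1) → ℝ) :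
    ∃ i ∈ S, ∀ j ∈ S, v j ≤ v i := by
  obtain ⟨⟨i, hi⟩, hmax⟩ := @Finite.exists_max S ℝ _ (Set.Nonempty.to_subtype hS) _
    (fun a => v a)
  exact ⟨i, hi, fun j hj => hmax ⟨j, hj⟩⟩

-- eventual linearization of vmax along a ray
lemma eventually_vmax {k : ℕ} (u v : Fin (k+1) → ℝ) (i : Fin (k+1))
    (hi : i ∈ suppmax u) (hmax : ∀ j ∈ suppmax u, v j ≤ v i) :
    ∀ᶠ θ in nhdsWithin (0:ℝ) (Set.Ioi 0), vmax (u + θ • v) = vmax u + θ * v i := by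
  have hub : ∀ j, ∀ᶠ θ in nhdsWithin (0:ℝ) (Set.Ioi 0),
      u j + θ * v j ≤ vmax u + θ * v i := by
    intro j
    by_cases hj : j ∈ suppmax u
    · filter_upwards [self_mem_nhdsWithin] with θ hθ
      have h1 : u j ≤ vmax u := le_vmax u j
      have h2 : v j ≤ v i := hmax j hj
      have hθ0 : (0:ℝ) ≤ θ := le_of_lt hθ
      nlinarith
    · have hlt : u j < vmax u := by
        rcases lt_or_eq_of_le (le_vmax u j) with h' | h'
        · exact h'
        · exact absurd (fun j' => le_of_le_of_eq (le_vmax u j') h'.symm) hj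
      have hcont : Filter.Tendsto (fun θ : ℝ => u j + θ * v j) (nhdsWithin 0 (Set.Ioi 0))
          (nhds (u j)) := by
        have : Filter.Tendsto (fun θ : ℝ => u j + θ * v j) (nhds 0) (nhds (u j + 0 * v j)) := by
          exact (continuous_const.add (continuous_id.mul continuous_const)).tendsto 0
        simpa using this.mono_left nhdsWithin_le_nhds
      have hcont2 : Filter.Tendsto (fun θ : ℝ => vmax u + θ * v i) (nhdsWithin (0:ℝ) (Set.Ioi 0))
          (nhds (vmax u)) := by
        have : Filter.Tendsto (fun θ : ℝ => vmax u + θ * v i) (nhds 0)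
            (nhds (vmax u + 0 * v i)) :=
          (continuous_const.add (continuous_id.mul continuous_const)).tendsto 0
        simpa using this.mono_left nhdsWithin_le_nhds
      filter_upwards [hcont.eventually_lt hcont2 hlt] with θ hθ using le_of_lt hθ
  have hall := (Filter.eventually_all_finset Finset.univ).mpr (fun j _ => hub j)
  filter_upwards [hall] with θ hθ
  apply le_antisymm
  · apply ciSup_le
    intro j
    have := hθ j (Finset.mem_univ j)
    simpa [smul_eq_mul] using this
  · have := le_vmax (u + θ • v) i
    have hui : u i + θ * v i = vmax u + θ * v i := by rw [vmax_eq hi]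
    calc vmax u + θ * v i = u i + θ * v i := by rw [vmax_eq hi]
      _ = (u + θ • v) i := by simp [smul_eq_mul]
      _ ≤ vmax (u + θ • v) := le_vmax _ i

lemma tendsto_quot (a d c : ℝ) :
    Filter.Tendsto (fun θ : ℝ => (a + θ*d + θ^2*c - a)/θ) (nhdsWithin 0 (Set.Ioi 0))
      (nhds d) := by
  have h1 : Filter.Tendsto (fun θ : ℝ => d + θ*c) (nhdsWithin (0:ℝ) (Set.Ioi 0)) (nhds d) := by
    have hc : Continuous (fun θ : ℝ => d + θ*c) := by continuity
    have := hc.tendsto 0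
    simpa using this.mono_left nhdsWithin_le_nhds
  apply h1.congr'
  filter_upwards [self_mem_nhdsWithin] with θ hθ
  have hθ0 : θ ≠ 0 := ne_of_gt hθ
  field_simp
  ring

lemma tendsto_poly (a d c : ℝ) :
    Filter.Tendsto (fun θ : ℝ => a + θ*d + θ^2*c) (nhdsWithin (0:ℝ) (Set.Ioi 0)) (nhds a) := by
  have hc : Continuous (fun θ : ℝ => a + θ*d + θ^2*c) := by continuity
  have := hc.tendsto 0
  simpa using this.mono_left nhdsWithin_le_nhds

lemma hasPosDeriv_line {m n : ℕ} (R C : Matrix (Fin (m+1)) (Fin (n+1)) ℝ)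
    (x x' : Fin (m+1) → ℝ) (y y' : Fin (n+1) → ℝ) {iR : Fin (m+1)} {jC : Fin (n+1)}
    (hiR : iR ∈ SR R y)
    (hiRmax : ∀ i ∈ SR R y, R.mulVec (y' - y) i ≤ R.mulVec (y' - y) iR)
    (hjC : jC ∈ SC C x)
    (hjCmax : ∀ j ∈ SC C x, Matrix.vecMul (x' - x) C j ≤ Matrix.vecMul (x' - x) C jC) :
    HasPosDeriv (fun θ : ℝ => fNE R C (x + θ • (x' - x)) (y + θ • (y' - y)))
      (if fC C x y < fR R x y then
        R.mulVec (y' - y) iR - (x' - x) ⬝ᵥ R.mulVec y - x ⬝ᵥ R.mulVec (y' - y)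
      else if fR R x y < fC C x y then
        Matrix.vecMul (x' - x) C jC - (x' - x) ⬝ᵥ C.mulVec y - x ⬝ᵥ C.mulVec (y' - y)
      else max (R.mulVec (y' - y) iR - (x' - x) ⬝ᵥ R.mulVec y - x ⬝ᵥ R.mulVec (y' - y))
        (Matrix.vecMul (x' - x) C jC - (x' - x) ⬝ᵥ C.mulVec y - x ⬝ᵥ C.mulVec (y' - y))) := by
  set dR : ℝ := R.mulVec (y' - y) iR - (x' - x) ⬝ᵥ R.mulVec y - x ⬝ᵥ R.mulVec (y' - y) with hdR
  set dC : ℝ := Matrix.vecMul (x' - x) C jC - (x' - x) ⬝ᵥ C.mulVec y - x ⬝ᵥ C.mulVec (y' - y)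
    with hdC
  set cR : ℝ := -((x' - x) ⬝ᵥ R.mulVec (y' - y)) with hcR
  set cC : ℝ := -((x' - x) ⬝ᵥ C.mulVec (y' - y)) with hcC
  set aR : ℝ := fR R x y with haR
  set aC : ℝ := fC C x y with haC
  set F : ℝ → ℝ := fun θ : ℝ => fNE R C (x + θ • (x' - x)) (y + θ • (y' - y)) with hFdef
  show HasPosDeriv F _
  have hF0 : F 0 = max aR aC := by
    simp [hFdef, fNE, haR, haC]
  have hevR := eventually_vmax (R.mulVec y) (R.mulVec (y' - y)) iR hiR hiRmax
  have hevC := eventually_vmax (Matrix.vecMul x C) (Matrix.vecMul (x' - x) C) jC hjC hjCmax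
  have hkey : ∀ᶠ θ in nhdsWithin (0:ℝ) (Set.Ioi 0),
      F θ = max (aR + θ*dR + θ^2*cR) (aC + θ*dC + θ^2*cC) := by
    filter_upwards [hevR, hevC] with θ h1 h2
    have hmvR : R.mulVec (y + θ • (y' - y)) = R.mulVec y + θ • R.mulVec (y' - y) := by
      rw [Matrix.mulVec_add, Matrix.mulVec_smul]
    have hmvC : Matrix.vecMul (x + θ • (x' - x)) C
        = Matrix.vecMul x C + θ • Matrix.vecMul (x' - x) C := by
      rw [Matrix.add_vecMul, Matrix.smul_vecMul]
    have hdotR : (x + θ • (x' - x)) ⬝ᵥ R.mulVec (y + θ • (y' - y))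
        = x ⬝ᵥ R.mulVec y + θ * ((x' - x) ⬝ᵥ R.mulVec y + x ⬝ᵥ R.mulVec (y' - y))
          + θ^2 * ((x' - x) ⬝ᵥ R.mulVec (y' - y)) := by
      rw [hmvR]
      simp only [add_dotProduct, dotProduct_add, smul_dotProduct,
        dotProduct_smul, smul_eq_mul]
      ring
    have hdotC : (x + θ • (x' - x)) ⬝ᵥ C.mulVec (y + θ • (y' - y))
        = x ⬝ᵥ C.mulVec y + θ * ((x' - x) ⬝ᵥ C.mulVec y + x ⬝ᵥ C.mulVec (y' - y))
          + θ^2 * ((x' - x) ⬝ᵥ C.mulVec (y' - y)) := by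
      rw [Matrix.mulVec_add, Matrix.mulVec_smul]
      simp only [add_dotProduct, dotProduct_add, smul_dotProduct,
        dotProduct_smul, smul_eq_mul]
      ring
    have e1 : fR R (x + θ • (x' - x)) (y + θ • (y' - y)) = aR + θ*dR + θ^2*cR := by
      rw [haR, hdR, hcR]
      unfold fR
      rw [hdotR, hmvR, h1]
      ring
    have e2 : fC C (x + θ • (x' - x)) (y + θ • (y' - y)) = aC + θ*dC + θ^2*cC := by
      rw [haC, hdC, hcC]
      unfold fC
      rw [hdotC, hmvC, h2]
      ring
    show fNE R C _ _ = _
    unfold fNE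
    rw [e1, e2]
  rcases lt_trichotomy aC aR with hlt | heq | hgt
  · rw [if_pos hlt]
    unfold HasPosDeriv
    have hev2 : ∀ᶠ θ in nhdsWithin (0:ℝ) (Set.Ioi 0),
        aC + θ*dC + θ^2*cC < aR + θ*dR + θ^2*cR :=
      (tendsto_poly aC dC cC).eventually_lt (tendsto_poly aR dR cR) hlt
    apply (tendsto_quot aR dR cR).congr'
    filter_upwards [hkey, hev2] with θ h1 h2
    rw [hF0, h1, max_eq_left (le_of_lt h2), max_eq_left (le_of_lt hlt)]
  · have hne1 : ¬ aC < aR := by rw [heq]; exact lt_irrefl _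
    have hne2 : ¬ aR < aC := by rw [heq]; exact lt_irrefl _
    rw [if_neg hne1, if_neg hne2]
    unfold HasPosDeriv
    apply Filter.Tendsto.congr' _ ((tendsto_quot aR dR cR).max (tendsto_quot aC dC cC))
    filter_upwards [hkey, self_mem_nhdsWithin] with θ hθ1 hθ
    have hθ0 : (0:ℝ) < θ := hθ
    rw [hF0, hθ1, max_eq_left (le_of_eq heq), heq, max_div_div_right hθ0.le,
      max_sub_sub_right]
  · have hne1 : ¬ aC < aR := lt_asymm hgt
    rw [if_neg hne1, if_pos hgt]
    unfold HasPosDeriv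
    have hev2 : ∀ᶠ θ in nhdsWithin (0:ℝ) (Set.Ioi 0),
        aR + θ*dR + θ^2*cR < aC + θ*dC + θ^2*cC :=
      (tendsto_poly aR dR cR).eventually_lt (tendsto_poly aC dC cC) hgt
    apply (tendsto_quot aC dC cC).congr'
    filter_upwards [hkey, hev2] with θ h1 h2
    rw [hF0, h1, max_eq_right (le_of_lt h2), max_eq_right (le_of_lt hgt)]

lemma single_mem_Δ {k : ℕ} (i : Fin (k+1)) : (Pi.single i 1 : Fin (k+1) → ℝ) ∈ Δ (k+1) := by
  constructor
  · intro j
    rcases eq_or_ne j i with h | h <;> simp [Pi.single_apply, h]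
  · simp [Finset.sum_pi_single']

lemma fR_nonneg {m n : ℕ} (R : Matrix (Fin (m+1)) (Fin (n+1)) ℝ) {x y}
    (hx : x ∈ Δ (m+1)) : 0 ≤ fR R x y :=
  sub_nonneg.mpr (dot_le_vmax hx)

lemma fC_nonneg {m n : ℕ} (C : Matrix (Fin (m+1)) (Fin (n+1)) ℝ) {x y}
    (hy : y ∈ Δ (n+1)) : 0 ≤ fC C x y := by
  unfold fC
  rw [Matrix.dotProduct_mulVec, dotProduct_comm]
  exact sub_nonneg.mpr (dot_le_vmax hy)

lemma dot_le_of_supp {k : ℕ} {w v : Fin (k+1) → ℝ} (hw : w ∈ Δ (k+1)) {c : ℝ}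
    (h : ∀ a ∈ supp w, v a ≤ c) : w ⬝ᵥ v ≤ c := by
  calc w ⬝ᵥ v = ∑ a, w a * v a := rfl
    _ ≤ ∑ a, w a * c := by
        apply Finset.sum_le_sum
        intro a _
        rcases lt_or_eq_of_le (hw.1 a) with h' | h'
        · exact mul_le_mul_of_nonneg_left (h a h') (hw.1 a)
        · rw [← h']; simp
    _ = c := by rw [← Finset.sum_mul, hw.2, one_mul]

lemma dot_min_le {k : ℕ} {x x' A : Fin (k+1) → ℝ} (hx : x ∈ Δ (k+1)) (hx' : x' ∈ Δ (k+1))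
    (h : supp x ⊆ suppmin A) : x ⬝ᵥ A ≤ x' ⬝ᵥ A := by
  have hub : ∀ j, x ⬝ᵥ A ≤ A j := by
    intro j
    calc x ⬝ᵥ A = ∑ l, x l * A l := rfl
      _ ≤ ∑ l, x l * A j := by
          apply Finset.sum_le_sum
          intro l _
          rcases lt_or_eq_of_le (hx.1 l) with h' | h'
          · exact mul_le_mul_of_nonneg_left (h h' j) (hx.1 l)
          · rw [← h']; simp
      _ = A j := by rw [← Finset.sum_mul, hx.2, one_mul]
  calc x ⬝ᵥ A = ∑ j, x' j * (x ⬝ᵥ A) := by rw [← Finset.sum_mul, hx'.2, one_mul]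
    _ ≤ ∑ j, x' j * A j := Finset.sum_le_sum fun j _ =>
        mul_le_mul_of_nonneg_left (hub j) (hx'.1 j)
    _ = x' ⬝ᵥ A := rfl

lemma supp_subset_suppmin {k : ℕ} {x A : Fin (k+1) → ℝ} (hx : x ∈ Δ (k+1))
    (h : ∀ i, x ⬝ᵥ A ≤ A i) : supp x ⊆ suppmin A := by
  intro i hi
  have hieq : A i = x ⬝ᵥ A := by
    by_contra hne
    have hlt : x ⬝ᵥ A < A i := lt_of_le_of_ne (h i) (Ne.symm hne)
    have : ∑ l, x l * (x ⬝ᵥ A) < ∑ l, x l * A l := by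
      apply Finset.sum_lt_sum
      · intro l _
        exact mul_le_mul_of_nonneg_left (h l) (hx.1 l)
      · exact ⟨i, Finset.mem_univ i, mul_lt_mul_of_pos_left hlt hi⟩
    rw [← Finset.sum_mul, hx.2, one_mul] at this
    exact lt_irrefl _ this
  intro j
  rw [hieq]
  exact h j

lemma backward_dir {m n : ℕ} (R C : Matrix (Fin (m+1)) (Fin (n+1)) ℝ)
    (xs : Fin (m+1) → ℝ) (ys : Fin (n+1) → ℝ)
    (hxs : xs ∈ Δ (m+1)) (hys : ys ∈ Δ (n+1))
    (hfeq : fR R xs ys = fC C xs ys)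
    (ρ : ℝ) (w : Fin (m+1) → ℝ) (z : Fin (n+1) → ℝ)
    (hdf : dualFeasible R C xs ys ρ w z)
    (hA : supp xs ⊆ suppmin (Avec R C ρ ys z))
    (hB : supp ys ⊆ suppmin (Bvec R C ρ xs w)) :
    IsStationary R C xs ys := by
  obtain ⟨hρ, hwΔ, hwS, hzΔ, hzS⟩ := hdf
  intro x' hx' y' hy'
  obtain ⟨i₀, hi₀⟩ := exists_suppmax (R.mulVec ys)
  obtain ⟨j₀, hj₀⟩ := exists_suppmax (Matrix.vecMul xs C)
  obtain ⟨iR, hiR, hiRmax⟩ := exists_argmax_on (SR R ys) ⟨i₀, hi₀⟩ (R.mulVec (y' - ys))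
  obtain ⟨jC, hjC, hjCmax⟩ := exists_argmax_on (SC C xs) ⟨j₀, hj₀⟩ (Matrix.vecMul (x' - xs) C)
  set dR : ℝ := R.mulVec (y' - ys) iR - (x' - xs) ⬝ᵥ R.mulVec ys - xs ⬝ᵥ R.mulVec (y' - ys)
    with hdRdef
  set dC : ℝ := Matrix.vecMul (x' - xs) C jC - (x' - xs) ⬝ᵥ C.mulVec ys
    - xs ⬝ᵥ C.mulVec (y' - ys) with hdCdef
  refine ⟨max dR dC, ?_, ?_⟩
  · have hD := hasPosDeriv_line R C xs x' ys y' hiR hiRmax hjC hjCmax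
    have hne1 : ¬ fC C xs ys < fR R xs ys := by rw [hfeq]; exact lt_irrefl _
    have hne2 : ¬ fR R xs ys < fC C xs ys := by rw [hfeq]; exact lt_irrefl _
    rwa [if_neg hne1, if_neg hne2] at hD
  · -- positivity
    set A : Fin (m+1) → ℝ := Avec R C ρ ys z with hAdef
    set B : Fin (n+1) → ℝ := Bvec R C ρ xs w with hBdef
    have h1 : w ⬝ᵥ R.mulVec (y' - ys) ≤ R.mulVec (y' - ys) iR :=
      dot_le_of_supp hwΔ (fun a ha => hiRmax a (hwS ha))
    have h2 : (x' - xs) ⬝ᵥ C.mulVec z ≤ Matrix.vecMul (x' - xs) C jC := by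
      rw [Matrix.dotProduct_mulVec, dotProduct_comm]
      exact dot_le_of_supp hzΔ (fun b hb => hjCmax b (hzS hb))
    have h3 : xs ⬝ᵥ A ≤ x' ⬝ᵥ A := dot_min_le hxs hx' hA
    have h4 : ys ⬝ᵥ B ≤ y' ⬝ᵥ B := dot_min_le hys hy' hB
    have h5 : ρ * (w ⬝ᵥ R.mulVec (y' - ys) - (x' - xs) ⬝ᵥ R.mulVec ys
          - xs ⬝ᵥ R.mulVec (y' - ys))
        + (1 - ρ) * ((x' - xs) ⬝ᵥ C.mulVec z - (x' - xs) ⬝ᵥ C.mulVec ys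
          - xs ⬝ᵥ C.mulVec (y' - ys))
        = (x' - xs) ⬝ᵥ A + (y' - ys) ⬝ᵥ B := by
      rw [hAdef, hBdef]
      unfold Avec Bvec
      have e1 : (y' - ys) ⬝ᵥ Matrix.vecMul w R = w ⬝ᵥ R.mulVec (y' - ys) := by
        rw [Matrix.dotProduct_mulVec, dotProduct_comm]
      have e2 : (y' - ys) ⬝ᵥ Matrix.vecMul xs R = xs ⬝ᵥ R.mulVec (y' - ys) := by
        rw [Matrix.dotProduct_mulVec, dotProduct_comm]
      have e3 : (y' - ys) ⬝ᵥ Matrix.vecMul xs C = xs ⬝ᵥ C.mulVec (y' - ys) := by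
        rw [Matrix.dotProduct_mulVec, dotProduct_comm]
      simp only [dotProduct_add, dotProduct_sub, dotProduct_smul,
        smul_eq_mul, dotProduct_neg, neg_smul, e1, e2, e3]
      ring
    have e6 : ρ * (w ⬝ᵥ R.mulVec (y' - ys) - (x' - xs) ⬝ᵥ R.mulVec ys
          - xs ⬝ᵥ R.mulVec (y' - ys)) ≤ ρ * dR :=
      mul_le_mul_of_nonneg_left (by rw [hdRdef]; linarith) hρ.1
    have e7 : (1 - ρ) * ((x' - xs) ⬝ᵥ C.mulVec z - (x' - xs) ⬝ᵥ C.mulVec ys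
          - xs ⬝ᵥ C.mulVec (y' - ys)) ≤ (1 - ρ) * dC :=
      mul_le_mul_of_nonneg_left (by rw [hdCdef]; linarith) (by linarith [hρ.2])
    have e8 : ρ * dR + (1 - ρ) * dC ≤ max dR dC := by
      have := mul_le_mul_of_nonneg_left (le_max_left dR dC) hρ.1
      have := mul_le_mul_of_nonneg_left (le_max_right dR dC) (by linarith [hρ.2] : (0:ℝ) ≤ 1 - ρ)
      nlinarith
    have e9 : (x' - xs) ⬝ᵥ A = x' ⬝ᵥ A - xs ⬝ᵥ A := sub_dotProduct x' xs A
    have e10 : (y' - ys) ⬝ᵥ B = y' ⬝ᵥ B - ys ⬝ᵥ B := sub_dotProduct y' ys B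
    linarith [h5, e6, e7, e8]

lemma forward_feq {m n : ℕ} (R C : Matrix (Fin (m+1)) (Fin (n+1)) ℝ)
    (xs : Fin (m+1) → ℝ) (ys : Fin (n+1) → ℝ)
    (hxs : xs ∈ Δ (m+1)) (hys : ys ∈ Δ (n+1))
    (hst : IsStationary R C xs ys) : fR R xs ys = fC C xs ys := by
  obtain ⟨i₀, hi₀⟩ := exists_suppmax (R.mulVec ys)
  obtain ⟨j₀, hj₀⟩ := exists_suppmax (Matrix.vecMul xs C)
  by_contra hne
  rcases lt_or_gt_of_ne hne with hlt | hgt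
  · -- fR < fC : use direction (xs, e_{j₀})
    set y' : Fin (n+1) → ℝ := Pi.single j₀ 1 with hy'def
    obtain ⟨d, hd, hd0⟩ := hst xs hxs y' (single_mem_Δ j₀)
    obtain ⟨iR, hiR, hiRmax⟩ := exists_argmax_on (SR R ys) ⟨i₀, hi₀⟩ (R.mulVec (y' - ys))
    obtain ⟨jC, hjC, hjCmax⟩ := exists_argmax_on (SC C xs) ⟨j₀, hj₀⟩
      (Matrix.vecMul (xs - xs) C)
    have hD := hasPosDeriv_line R C xs xs ys y' hiR hiRmax hjC hjCmax
    rw [if_neg (lt_asymm hlt), if_pos hlt] at hD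
    have hdeq := tendsto_nhds_unique hd hD
    have hzero : Matrix.vecMul (xs - xs) C = 0 := by
      rw [sub_self, Matrix.zero_vecMul]
    have hsingle : xs ⬝ᵥ C.mulVec y' = vmax (Matrix.vecMul xs C) := by
      rw [Matrix.dotProduct_mulVec, hy'def, dotProduct_single, mul_one, vmax_eq hj₀]
    have hDval : Matrix.vecMul (xs - xs) C jC - (xs - xs) ⬝ᵥ C.mulVec ys
        - xs ⬝ᵥ C.mulVec (y' - ys) = -(fC C xs ys) := by
      rw [hzero, Matrix.mulVec_sub, dotProduct_sub, hsingle]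
      simp [fC]
    rw [hDval] at hdeq
    have hfC0 : 0 ≤ fR R xs ys := fR_nonneg R hxs
    linarith
  · -- fC < fR : use direction (e_{i₀}, ys)
    set x' : Fin (m+1) → ℝ := Pi.single i₀ 1 with hx'def
    obtain ⟨d, hd, hd0⟩ := hst x' (single_mem_Δ i₀) ys hys
    obtain ⟨iR, hiR, hiRmax⟩ := exists_argmax_on (SR R ys) ⟨i₀, hi₀⟩ (R.mulVec (ys - ys))
    obtain ⟨jC, hjC, hjCmax⟩ := exists_argmax_on (SC C xs) ⟨j₀, hj₀⟩
      (Matrix.vecMul (x' - xs) C)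
    have hD := hasPosDeriv_line R C xs x' ys ys hiR hiRmax hjC hjCmax
    rw [if_pos hgt] at hD
    have hdeq := tendsto_nhds_unique hd hD
    have hzero : R.mulVec (ys - ys) = 0 := by
      rw [sub_self, Matrix.mulVec_zero]
    have hsingle : x' ⬝ᵥ R.mulVec ys = vmax (R.mulVec ys) := by
      rw [hx'def, single_dotProduct, one_mul, vmax_eq hi₀]
    have hDval : R.mulVec (ys - ys) iR - (x' - xs) ⬝ᵥ R.mulVec ys
        - xs ⬝ᵥ R.mulVec (ys - ys) = -(fR R xs ys) := by
      rw [hzero, sub_dotProduct, hsingle]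
      simp [fR]
    rw [hDval] at hdeq
    have hfC0 : 0 ≤ fC C xs ys := fC_nonneg C hys
    linarith

lemma myminimax {P K : Type*} [Fintype P] [Nonempty P] [Fintype K] [Nonempty K]
    (G : P → K → ℝ)
    (h : ∀ lam : P → ℝ, (∀ p, 0 ≤ lam p) → ∑ p, lam p = 1 → ∃ k, 0 ≤ ∑ p, lam p * G p k) :
    ∃ q : K → ℝ, (∀ k, 0 ≤ q k) ∧ ∑ k, q k = 1 ∧ ∀ p, 0 ≤ ∑ k, q k * G p k := by
  by_contra hcon
  push_neg at hcon
  set T : (K → ℝ) → (P → ℝ) := fun q => fun p => ∑ k, q k * G p k with hT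
  have hTlin : IsLinearMap ℝ T := by
    constructor
    · intro a b; funext p; simp [hT, add_mul, Finset.sum_add_distrib]
    · intro c a; funext p
      simp [hT, smul_eq_mul, Finset.mul_sum, mul_assoc]
  set S : Set (P → ℝ) := T '' stdSimplex ℝ K with hS
  have hSconv : Convex ℝ S := (convex_stdSimplex ℝ K).is_linear_image hTlin
  have hTcont : Continuous T := by
    apply continuous_pi
    intro p
    exact continuous_finset_sum _ fun k _ => (continuous_apply k).mul continuous_const
  have hScomp : IsCompact S := (isCompact_stdSimplex ℝ K).image hTcont
  set O : Set (P → ℝ) := Set.univ.pi (fun _ : P => Set.Ici (0:ℝ)) with hO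
  have hOconv : Convex ℝ O := convex_pi fun _ _ => convex_Ici 0
  have hOclosed : IsClosed O := isClosed_set_pi fun _ _ => isClosed_Ici
  have hdisj : Disjoint S O := by
    rw [Set.disjoint_left]
    rintro a ⟨q, hq, rfl⟩ haO
    obtain ⟨p, hp⟩ := hcon q hq.1 hq.2
    have := haO p (Set.mem_univ p)
    simp only [Set.mem_Ici] at this
    exact absurd this (not_le.mpr hp)
  obtain ⟨f, u, v, hsu, huv, hvt⟩ :=
    geometric_hahn_banach_compact_closed hSconv hScomp hOconv hOclosed hdisj
  set e : P → (P → ℝ) := fun p => fun j => if p = j then 1 else 0 with he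
  set lam0 : P → ℝ := fun p => f (e p) with hlam0def
  have hv0 : v < 0 := by
    have h0 : (0 : P → ℝ) ∈ O := by
      intro p _; exact Set.mem_Ici.mpr le_rfl
    have := hvt 0 h0
    rwa [map_zero] at this
  have hlam0 : ∀ p, 0 ≤ lam0 p := by
    intro p
    by_contra hneg
    push_neg at hneg
    set c : ℝ := max 0 ((v-1)/lam0 p) with hc
    have hc0 : 0 ≤ c := le_max_left _ _
    have hb : (c • e p : P → ℝ) ∈ O := by
      intro p' _
      simp only [Set.mem_Ici, Pi.smul_apply, smul_eq_mul, he]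
      exact mul_nonneg hc0 (by by_cases hpp : p = p' <;> simp [hpp])
    have hfb : v < f (c • e p) := hvt _ hb
    rw [f.map_smul] at hfb
    have hcle : (v-1)/lam0 p ≤ c := le_max_right _ _
    have : c * lam0 p ≤ v - 1 := (div_le_iff_of_neg hneg).mp hcle
    simp only [smul_eq_mul] at hfb
    linarith
  have hrepr : ∀ a : P → ℝ, f a = ∑ p, a p * lam0 p := by
    intro a
    have ha : a = ∑ p, a p • e p := by
      funext j
      simp [he, Finset.sum_apply, Finset.sum_ite_eq, mul_ite]
    conv_lhs => rw [ha]
    rw [map_sum]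
    congr 1; funext p
    rw [f.map_smul, smul_eq_mul]
  have hpos : 0 < ∑ p, lam0 p := by
    rcases lt_or_eq_of_le (Finset.sum_nonneg fun p _ => hlam0 p) with h' | h'
    · exact h'
    · exfalso
      have hall : ∀ p, lam0 p = 0 := by
        intro p
        have := (Finset.sum_eq_zero_iff_of_nonneg (fun p _ => hlam0 p)).mp h'.symm
        exact this p (Finset.mem_univ p)
      obtain ⟨k0⟩ := ‹Nonempty K›
      have hmem : (fun p => G p k0) ∈ S := by
        refine ⟨fun k' => if k0 = k' then 1 else 0, ⟨fun k => by positivity, by simp⟩, ?_⟩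
        funext p
        simp [hT, ite_mul]
      have := hsu _ hmem
      rw [hrepr] at this
      simp [hall] at this
      linarith
  set lam : P → ℝ := fun p => lam0 p / ∑ p', lam0 p' with hlamdef
  obtain ⟨k, hk⟩ := h lam (fun p => div_nonneg (hlam0 p) hpos.le)
    (by rw [← Finset.sum_div, div_self hpos.ne'])
  have hmem : (fun p => G p k) ∈ S := by
    refine ⟨fun k' => if k = k' then 1 else 0, ⟨fun k' => by positivity, by simp⟩, ?_⟩
    funext p
    simp [hT, ite_mul]
  have hlt := hsu _ hmem
  rw [hrepr] at hlt
  have heq : ∑ p, G p k * lam0 p = (∑ p', lam0 p') * ∑ p, lam p * G p k := by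
    rw [Finset.mul_sum]
    congr 1; funext p
    simp only [hlamdef]
    field_simp
  have : 0 ≤ ∑ p, G p k * lam0 p := by
    rw [heq]; exact mul_nonneg hpos.le hk
  linarith

lemma forward_dual {m n : ℕ} (R C : Matrix (Fin (m+1)) (Fin (n+1)) ℝ)
    (xs : Fin (m+1) → ℝ) (ys : Fin (n+1) → ℝ)
    (hxs : xs ∈ Δ (m+1)) (hys : ys ∈ Δ (n+1))
    (hst : IsStationary R C xs ys) (hfeq : fR R xs ys = fC C xs ys) :
    ∃ ρs ws zs, dualFeasible R C xs ys ρs ws zs ∧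
      supp xs ⊆ suppmin (Avec R C ρs ys zs) ∧
      supp ys ⊆ suppmin (Bvec R C ρs xs ws) := by
  obtain ⟨i₀, hi₀⟩ := exists_suppmax (R.mulVec ys)
  obtain ⟨j₀, hj₀⟩ := exists_suppmax (Matrix.vecMul xs C)
  have hne1 : ¬ fC C xs ys < fR R xs ys := by rw [hfeq]; exact lt_irrefl _
  have hne2 : ¬ fR R xs ys < fC C xs ys := by rw [hfeq]; exact lt_irrefl _
  haveI : Nonempty ({a : Fin (m+1) // a ∈ SR R ys} ⊕ {b : Fin (n+1) // b ∈ SC C xs}) :=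
    ⟨Sum.inl ⟨i₀, hi₀⟩⟩
  set Acol : ({a : Fin (m+1) // a ∈ SR R ys} ⊕ {b : Fin (n+1) // b ∈ SC C xs})
      → (Fin (m+1) → ℝ) :=
    Sum.elim (fun _ => -(R.mulVec ys))
      (fun b => C.mulVec (Pi.single b.1 1) - C.mulVec ys) with hAcol
  set Bcol : ({a : Fin (m+1) // a ∈ SR R ys} ⊕ {b : Fin (n+1) // b ∈ SC C xs})
      → (Fin (n+1) → ℝ) :=
    Sum.elim (fun a => Matrix.vecMul (Pi.single a.1 1) R - Matrix.vecMul xs R)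
      (fun _ => -(Matrix.vecMul xs C)) with hBcol
  set G : (Fin (m+1) × Fin (n+1))
      → ({a : Fin (m+1) // a ∈ SR R ys} ⊕ {b : Fin (n+1) // b ∈ SC C xs}) → ℝ :=
    fun p k => (Pi.single p.1 1 - xs) ⬝ᵥ Acol k + (Pi.single p.2 1 - ys) ⬝ᵥ Bcol k with hG
  -- the minimax hypothesis
  have hhyp : ∀ lam : (Fin (m+1) × Fin (n+1)) → ℝ, (∀ p, 0 ≤ lam p) → ∑ p, lam p = 1 →
      ∃ k, 0 ≤ ∑ p, lam p * G p k := by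
    intro lam hlam hlam1
    set x' : Fin (m+1) → ℝ := fun i => ∑ j, lam (i, j) with hx'def
    set y' : Fin (n+1) → ℝ := fun j => ∑ i, lam (i, j) with hy'def
    have hx'Δ : x' ∈ Δ (m+1) := by
      constructor
      · intro i; exact Finset.sum_nonneg fun j _ => hlam _
      · rw [hx'def, ← hlam1, ← Fintype.sum_prod_type]
    have hy'Δ : y' ∈ Δ (n+1) := by
      constructor
      · intro j; exact Finset.sum_nonneg fun i _ => hlam _
      · calc ∑ j, y' j = ∑ j, ∑ i, lam (i, j) := rfl
          _ = ∑ i, ∑ j, lam (i, j) := Finset.sum_comm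
          _ = ∑ p, lam p := (Fintype.sum_prod_type lam).symm
          _ = 1 := hlam1
    have hrow : ∀ k, ∑ p, lam p * G p k = (x' - xs) ⬝ᵥ Acol k + (y' - ys) ⬝ᵥ Bcol k := by
      intro k
      have hGpk : ∀ p : Fin (m+1) × Fin (n+1), G p k
          = (Acol k p.1 - xs ⬝ᵥ Acol k) + (Bcol k p.2 - ys ⬝ᵥ Bcol k) := by
        intro p
        rw [hG]
        simp [sub_dotProduct, single_dotProduct]
      have p1 : ∑ p : Fin (m+1) × Fin (n+1), lam p * Acol k p.1 = x' ⬝ᵥ Acol k := by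
        calc ∑ p : Fin (m+1) × Fin (n+1), lam p * Acol k p.1
            = ∑ i, ∑ j, lam (i, j) * Acol k i := Fintype.sum_prod_type _
          _ = ∑ i, (∑ j, lam (i, j)) * Acol k i :=
              Finset.sum_congr rfl fun i _ => (Finset.sum_mul _ _ _).symm
          _ = x' ⬝ᵥ Acol k := rfl
      have p2 : ∑ p : Fin (m+1) × Fin (n+1), lam p * Bcol k p.2 = y' ⬝ᵥ Bcol k := by
        calc ∑ p : Fin (m+1) × Fin (n+1), lam p * Bcol k p.2
            = ∑ i, ∑ j, lam (i, j) * Bcol k j := Fintype.sum_prod_type _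
          _ = ∑ j, ∑ i, lam (i, j) * Bcol k j := Finset.sum_comm
          _ = ∑ j, (∑ i, lam (i, j)) * Bcol k j :=
              Finset.sum_congr rfl fun j _ => (Finset.sum_mul _ _ _).symm
          _ = y' ⬝ᵥ Bcol k := rfl
      calc ∑ p, lam p * G p k
          = ∑ p : Fin (m+1) × Fin (n+1), (lam p * Acol k p.1 + lam p * Bcol k p.2
            - lam p * (xs ⬝ᵥ Acol k) - lam p * (ys ⬝ᵥ Bcol k)) :=
            Finset.sum_congr rfl fun p _ => by rw [hGpk p]; ring
        _ = (∑ p : Fin (m+1) × Fin (n+1), lam p * Acol k p.1)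
            + (∑ p : Fin (m+1) × Fin (n+1), lam p * Bcol k p.2)
            - (∑ p : Fin (m+1) × Fin (n+1), lam p) * (xs ⬝ᵥ Acol k)
            - (∑ p : Fin (m+1) × Fin (n+1), lam p) * (ys ⬝ᵥ Bcol k) := by
            rw [Finset.sum_mul, Finset.sum_mul, Finset.sum_sub_distrib,
              Finset.sum_sub_distrib, Finset.sum_add_distrib]
        _ = (x' - xs) ⬝ᵥ Acol k + (y' - ys) ⬝ᵥ Bcol k := by
            rw [p1, p2, hlam1, sub_dotProduct, sub_dotProduct]
            ring
    obtain ⟨d, hd, hd0⟩ := hst x' hx'Δ y' hy'Δ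
    obtain ⟨iR, hiR, hiRmax⟩ := exists_argmax_on (SR R ys) ⟨i₀, hi₀⟩ (R.mulVec (y' - ys))
    obtain ⟨jC, hjC, hjCmax⟩ := exists_argmax_on (SC C xs) ⟨j₀, hj₀⟩
      (Matrix.vecMul (x' - xs) C)
    have hD := hasPosDeriv_line R C xs x' ys y' hiR hiRmax hjC hjCmax
    rw [if_neg hne1, if_neg hne2] at hD
    have hdeq := tendsto_nhds_unique hd hD
    have hmax : (0:ℝ) ≤ max
        (R.mulVec (y' - ys) iR - (x' - xs) ⬝ᵥ R.mulVec ys - xs ⬝ᵥ R.mulVec (y' - ys))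
        (Matrix.vecMul (x' - xs) C jC - (x' - xs) ⬝ᵥ C.mulVec ys
          - xs ⬝ᵥ C.mulVec (y' - ys)) := hdeq ▸ hd0
    rcases le_max_iff.mp hmax with h | h
    · refine ⟨Sum.inl ⟨iR, hiR⟩, ?_⟩
      rw [hrow]
      have e1 : (y' - ys) ⬝ᵥ Matrix.vecMul (Pi.single iR 1) R = R.mulVec (y' - ys) iR := by
        rw [dotProduct_comm, ← Matrix.dotProduct_mulVec, single_dotProduct,
          one_mul]
      have e2 : (y' - ys) ⬝ᵥ Matrix.vecMul xs R = xs ⬝ᵥ R.mulVec (y' - ys) := by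
        rw [dotProduct_comm, ← Matrix.dotProduct_mulVec]
      have : (x' - xs) ⬝ᵥ Acol (Sum.inl ⟨iR, hiR⟩) + (y' - ys) ⬝ᵥ Bcol (Sum.inl ⟨iR, hiR⟩)
          = R.mulVec (y' - ys) iR - (x' - xs) ⬝ᵥ R.mulVec ys - xs ⬝ᵥ R.mulVec (y' - ys) := by
        rw [hAcol, hBcol]
        simp only [Sum.elim_inl, dotProduct_neg, dotProduct_sub, e1, e2]
        ring
      rw [this]
      exact h
    · refine ⟨Sum.inr ⟨jC, hjC⟩, ?_⟩
      rw [hrow]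
      have e1 : (x' - xs) ⬝ᵥ C.mulVec (Pi.single jC 1) = Matrix.vecMul (x' - xs) C jC := by
        rw [Matrix.dotProduct_mulVec, dotProduct_single, mul_one]
      have e2 : (y' - ys) ⬝ᵥ Matrix.vecMul xs C = xs ⬝ᵥ C.mulVec (y' - ys) := by
        rw [dotProduct_comm, ← Matrix.dotProduct_mulVec]
      have : (x' - xs) ⬝ᵥ Acol (Sum.inr ⟨jC, hjC⟩) + (y' - ys) ⬝ᵥ Bcol (Sum.inr ⟨jC, hjC⟩)
          = Matrix.vecMul (x' - xs) C jC - (x' - xs) ⬝ᵥ C.mulVec ys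
            - xs ⬝ᵥ C.mulVec (y' - ys) := by
        rw [hAcol, hBcol]
        simp only [Sum.elim_inr, dotProduct_neg, dotProduct_sub, e1, e2]
        ring
      rw [this]
      exact h
  obtain ⟨q, hq0, hq1, hqrow⟩ := myminimax G hhyp
  -- recover (ρ, w, z) from q
  set ρ : ℝ := ∑ a : {a : Fin (m+1) // a ∈ SR R ys}, q (Sum.inl a) with hρdef
  have hρsplit : ρ + ∑ b : {b : Fin (n+1) // b ∈ SC C xs}, q (Sum.inr b) = 1 := by
    rw [hρdef, ← Fintype.sum_sum_type]
    exact hq1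
  have hρ0 : 0 ≤ ρ := Finset.sum_nonneg fun a _ => hq0 _
  have hρ1 : ρ ≤ 1 := by
    have : 0 ≤ ∑ b : {b : Fin (n+1) // b ∈ SC C xs}, q (Sum.inr b) :=
      Finset.sum_nonneg fun b _ => hq0 _
    linarith
  set wt : Fin (m+1) → ℝ :=
    fun i => ∑ a : {a : Fin (m+1) // a ∈ SR R ys}, (if a.1 = i then q (Sum.inl a) else 0)
    with hwtdef
  set zt : Fin (n+1) → ℝ :=
    fun j => ∑ b : {b : Fin (n+1) // b ∈ SC C xs}, (if b.1 = j then q (Sum.inr b) else 0)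
    with hztdef
  have hwt0 : ∀ i, 0 ≤ wt i := fun i =>
    Finset.sum_nonneg fun a _ => by split <;> simp [hq0]
  have hzt0 : ∀ j, 0 ≤ zt j := fun j =>
    Finset.sum_nonneg fun b _ => by split <;> simp [hq0]
  have hwtsum : ∑ i, wt i = ρ := by
    rw [hwtdef, hρdef, Finset.sum_comm]
    exact Finset.sum_congr rfl fun a _ => by simp [Finset.sum_ite_eq]
  have hztsum : ∑ j, zt j = 1 - ρ := by
    have : ∑ j, zt j = ∑ b : {b : Fin (n+1) // b ∈ SC C xs}, q (Sum.inr b) := by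
      rw [hztdef, Finset.sum_comm]
      exact Finset.sum_congr rfl fun b _ => by simp [Finset.sum_ite_eq]
    rw [this]; linarith
  -- the swap identities
  have hswapw : ∀ φ : Fin (m+1) → ℝ,
      ∑ a : {a : Fin (m+1) // a ∈ SR R ys}, q (Sum.inl a) * φ a.1 = ∑ i, wt i * φ i := by
    intro φ
    rw [hwtdef]
    simp only [Finset.sum_mul, ite_mul, zero_mul]
    rw [Finset.sum_comm]
    exact Finset.sum_congr rfl fun a _ => by simp [Finset.sum_ite_eq]
  have hswapz : ∀ φ : Fin (n+1) → ℝ,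
      ∑ b : {b : Fin (n+1) // b ∈ SC C xs}, q (Sum.inr b) * φ b.1 = ∑ j, zt j * φ j := by
    intro φ
    rw [hztdef]
    simp only [Finset.sum_mul, ite_mul, zero_mul]
    rw [Finset.sum_comm]
    exact Finset.sum_congr rfl fun b _ => by simp [Finset.sum_ite_eq]
  set w : Fin (m+1) → ℝ :=
    if _ : ρ = 0 then (Pi.single i₀ 1 : Fin (m+1) → ℝ) else ρ⁻¹ • wt with hwdef
  set z : Fin (n+1) → ℝ :=
    if _ : 1 - ρ = 0 then (Pi.single j₀ 1 : Fin (n+1) → ℝ) else (1-ρ)⁻¹ • zt with hzdef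
  have hwid : ∀ i, ρ * w i = wt i := by
    intro i
    by_cases hρz : ρ = 0
    · have hall : wt i = 0 := by
        have hs : ∑ a : {a : Fin (m+1) // a ∈ SR R ys}, q (Sum.inl a) = 0 := by
          rw [← hρdef]; exact hρz
        have := (Finset.sum_eq_zero_iff_of_nonneg
          (fun a _ => hq0 (Sum.inl a))).mp hs
        rw [hwtdef]
        exact Finset.sum_eq_zero fun a _ => by
          split
          · exact this a (Finset.mem_univ a)
          · rfl
      rw [hρz, hall, zero_mul]
    · rw [hwdef, dif_neg hρz]
      simp only [Pi.smul_apply, smul_eq_mul]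
      field_simp
  have hzid : ∀ j, (1 - ρ) * z j = zt j := by
    intro j
    by_cases hρz : 1 - ρ = 0
    · have hqz : ∀ b : {b : Fin (n+1) // b ∈ SC C xs}, q (Sum.inr b) = 0 := by
        have hs : ∑ b : {b : Fin (n+1) // b ∈ SC C xs}, q (Sum.inr b) = 0 := by linarith
        have := (Finset.sum_eq_zero_iff_of_nonneg
          (fun b _ => hq0 (Sum.inr b))).mp hs
        exact fun b => this b (Finset.mem_univ b)
      have hall : zt j = 0 := by
        rw [hztdef]
        exact Finset.sum_eq_zero fun b _ => by
          split
          · exact hqz b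
          · rfl
      rw [hρz, hall, zero_mul]
    · rw [hzdef, dif_neg hρz]
      simp only [Pi.smul_apply, smul_eq_mul]
      field_simp
  have hwΔ : w ∈ Δ (m+1) := by
    by_cases hρz : ρ = 0
    · rw [hwdef, dif_pos hρz]; exact single_mem_Δ i₀
    · rw [hwdef, dif_neg hρz]
      have hρpos : 0 < ρ := lt_of_le_of_ne hρ0 (Ne.symm hρz)
      constructor
      · intro i
        exact mul_nonneg (inv_nonneg.mpr hρ0) (hwt0 i)
      · simp only [Pi.smul_apply, smul_eq_mul]
        rw [← Finset.mul_sum, hwtsum, inv_mul_cancel₀ hρz]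
  have hzΔ : z ∈ Δ (n+1) := by
    by_cases hρz : 1 - ρ = 0
    · rw [hzdef, dif_pos hρz]; exact single_mem_Δ j₀
    · rw [hzdef, dif_neg hρz]
      have hρpos : 0 < 1 - ρ := lt_of_le_of_ne (by linarith) (Ne.symm hρz)
      constructor
      · intro j
        exact mul_nonneg (inv_nonneg.mpr hρpos.le) (hzt0 j)
      · simp only [Pi.smul_apply, smul_eq_mul]
        rw [← Finset.mul_sum, hztsum, inv_mul_cancel₀ hρz]
  have hwS : supp w ⊆ SR R ys := by
    intro i hi
    have hi' : 0 < w i := hi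
    by_cases hρz : ρ = 0
    · rw [hwdef, dif_pos hρz] at hi'
      have : i = i₀ := by
        by_contra hne
        rw [Pi.single_eq_of_ne hne] at hi'
        exact lt_irrefl _ hi'
      rw [this]; exact hi₀
    · rw [hwdef, dif_neg hρz] at hi'
      have hρpos : 0 < ρ := lt_of_le_of_ne hρ0 (Ne.symm hρz)
      have hwti : 0 < wt i := by
        simp only [Pi.smul_apply, smul_eq_mul] at hi'
        rcases lt_or_eq_of_le (hwt0 i) with h | h
        · exact h
        · rw [← h, mul_zero] at hi'
          exact absurd hi' (lt_irrefl 0)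
      by_contra hiS
      have : wt i = 0 := by
        rw [hwtdef]
        exact Finset.sum_eq_zero fun a _ => by
          rw [if_neg]
          intro h
          exact hiS (h ▸ a.2)
      rw [this] at hwti
      exact lt_irrefl _ hwti
  have hzS : supp z ⊆ SC C xs := by
    intro j hj
    have hj' : 0 < z j := hj
    by_cases hρz : 1 - ρ = 0
    · rw [hzdef, dif_pos hρz] at hj'
      have : j = j₀ := by
        by_contra hne
        rw [Pi.single_eq_of_ne hne] at hj'
        exact lt_irrefl _ hj'
      rw [this]; exact hj₀
    · rw [hzdef, dif_neg hρz] at hj'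
      have hρpos : 0 < 1 - ρ := lt_of_le_of_ne (by linarith) (Ne.symm hρz)
      have hzti : 0 < zt j := by
        simp only [Pi.smul_apply, smul_eq_mul] at hj'
        rcases lt_or_eq_of_le (hzt0 j) with h | h
        · exact h
        · rw [← h, mul_zero] at hj'
          exact absurd hj' (lt_irrefl 0)
      by_contra hjS
      have : zt j = 0 := by
        rw [hztdef]
        exact Finset.sum_eq_zero fun b _ => by
          rw [if_neg]
          intro h
          exact hjS (h ▸ b.2)
      rw [this] at hzti
      exact lt_irrefl _ hzti
  -- the aggregation identities
  have hAid : ∀ u : Fin (m+1) → ℝ,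
      ∑ k, q k * (u ⬝ᵥ Acol k) = u ⬝ᵥ Avec R C ρ ys z := by
    intro u
    rw [Fintype.sum_sum_type]
    have hL : ∑ a : {a : Fin (m+1) // a ∈ SR R ys}, q (Sum.inl a) * (u ⬝ᵥ Acol (Sum.inl a))
        = ρ * (-(u ⬝ᵥ R.mulVec ys)) := by
      rw [hρdef, Finset.sum_mul]
      refine Finset.sum_congr rfl fun a _ => ?_
      rw [hAcol]
      simp [dotProduct_neg]
    have hb : ∀ b : {b : Fin (n+1) // b ∈ SC C xs},
        u ⬝ᵥ Acol (Sum.inr b) = Matrix.vecMul u C b.1 - u ⬝ᵥ C.mulVec ys := by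
      intro b
      rw [hAcol]
      simp only [Sum.elim_inr, dotProduct_sub]
      rw [Matrix.dotProduct_mulVec, dotProduct_single, mul_one]
    have hzdot : ∑ j, zt j * Matrix.vecMul u C j = (1-ρ) * (u ⬝ᵥ C.mulVec z) := by
      have e : u ⬝ᵥ C.mulVec z = ∑ j, z j * Matrix.vecMul u C j := by
        rw [Matrix.dotProduct_mulVec, dotProduct_comm]
        rfl
      rw [e, Finset.mul_sum]
      refine Finset.sum_congr rfl fun j _ => ?_
      rw [← hzid j]
      ring
    have hR : ∑ b : {b : Fin (n+1) // b ∈ SC C xs},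
        q (Sum.inr b) * (u ⬝ᵥ Acol (Sum.inr b))
        = (1-ρ) * (u ⬝ᵥ C.mulVec z) - (1-ρ) * (u ⬝ᵥ C.mulVec ys) := by
      calc ∑ b : {b : Fin (n+1) // b ∈ SC C xs}, q (Sum.inr b) * (u ⬝ᵥ Acol (Sum.inr b))
          = ∑ b : {b : Fin (n+1) // b ∈ SC C xs},
            (q (Sum.inr b) * Matrix.vecMul u C b.1 - q (Sum.inr b) * (u ⬝ᵥ C.mulVec ys)) :=
            Finset.sum_congr rfl fun b _ => by rw [hb b]; ring
        _ = (∑ b : {b : Fin (n+1) // b ∈ SC C xs}, q (Sum.inr b) * Matrix.vecMul u C b.1)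
            - (∑ b : {b : Fin (n+1) // b ∈ SC C xs}, q (Sum.inr b)) * (u ⬝ᵥ C.mulVec ys) := by
            rw [Finset.sum_sub_distrib, Finset.sum_mul]
        _ = (1-ρ) * (u ⬝ᵥ C.mulVec z) - (1-ρ) * (u ⬝ᵥ C.mulVec ys) := by
            rw [hswapz, hzdot]
            have : ∑ b : {b : Fin (n+1) // b ∈ SC C xs}, q (Sum.inr b) = 1 - ρ := by linarith
            rw [this]
    rw [hL, hR]
    unfold Avec
    simp only [dotProduct_add, dotProduct_smul, dotProduct_sub,
      smul_eq_mul]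
    ring
  have hBid : ∀ v : Fin (n+1) → ℝ,
      ∑ k, q k * (v ⬝ᵥ Bcol k) = v ⬝ᵥ Bvec R C ρ xs w := by
    intro v
    rw [Fintype.sum_sum_type]
    have ha : ∀ a : {a : Fin (m+1) // a ∈ SR R ys},
        v ⬝ᵥ Bcol (Sum.inl a) = R.mulVec v a.1 - v ⬝ᵥ Matrix.vecMul xs R := by
      intro a
      rw [hBcol]
      simp only [Sum.elim_inl, dotProduct_sub]
      rw [dotProduct_comm, ← Matrix.dotProduct_mulVec, single_dotProduct,
        one_mul]
    have hwdot : ∑ i, wt i * R.mulVec v i = ρ * (w ⬝ᵥ R.mulVec v) := by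
      have e : w ⬝ᵥ R.mulVec v = ∑ i, w i * R.mulVec v i := rfl
      rw [e, Finset.mul_sum]
      refine Finset.sum_congr rfl fun i _ => ?_
      rw [← hwid i]
      ring
    have hL : ∑ a : {a : Fin (m+1) // a ∈ SR R ys},
        q (Sum.inl a) * (v ⬝ᵥ Bcol (Sum.inl a))
        = ρ * (w ⬝ᵥ R.mulVec v) - ρ * (v ⬝ᵥ Matrix.vecMul xs R) := by
      calc ∑ a : {a : Fin (m+1) // a ∈ SR R ys}, q (Sum.inl a) * (v ⬝ᵥ Bcol (Sum.inl a))
          = ∑ a : {a : Fin (m+1) // a ∈ SR R ys},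
            (q (Sum.inl a) * R.mulVec v a.1 - q (Sum.inl a) * (v ⬝ᵥ Matrix.vecMul xs R)) :=
            Finset.sum_congr rfl fun a _ => by rw [ha a]; ring
        _ = (∑ a : {a : Fin (m+1) // a ∈ SR R ys}, q (Sum.inl a) * R.mulVec v a.1)
            - (∑ a : {a : Fin (m+1) // a ∈ SR R ys}, q (Sum.inl a))
              * (v ⬝ᵥ Matrix.vecMul xs R) := by
            rw [Finset.sum_sub_distrib, Finset.sum_mul]
        _ = ρ * (w ⬝ᵥ R.mulVec v) - ρ * (v ⬝ᵥ Matrix.vecMul xs R) := by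
            rw [hswapw, hwdot, ← hρdef]
    have hR : ∑ b : {b : Fin (n+1) // b ∈ SC C xs},
        q (Sum.inr b) * (v ⬝ᵥ Bcol (Sum.inr b))
        = -((1-ρ) * (v ⬝ᵥ Matrix.vecMul xs C)) := by
      have hsum : ∑ b : {b : Fin (n+1) // b ∈ SC C xs}, q (Sum.inr b) = 1 - ρ := by linarith
      calc ∑ b : {b : Fin (n+1) // b ∈ SC C xs}, q (Sum.inr b) * (v ⬝ᵥ Bcol (Sum.inr b))
          = ∑ b : {b : Fin (n+1) // b ∈ SC C xs},
            q (Sum.inr b) * (-(v ⬝ᵥ Matrix.vecMul xs C)) :=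
            Finset.sum_congr rfl fun b _ => by rw [hBcol]; simp [dotProduct_neg]
        _ = (∑ b : {b : Fin (n+1) // b ∈ SC C xs}, q (Sum.inr b))
            * (-(v ⬝ᵥ Matrix.vecMul xs C)) := (Finset.sum_mul _ _ _).symm
        _ = -((1-ρ) * (v ⬝ᵥ Matrix.vecMul xs C)) := by rw [hsum]; ring
    rw [hL, hR]
    unfold Bvec
    have e1 : v ⬝ᵥ Matrix.vecMul w R = w ⬝ᵥ R.mulVec v := by
      rw [dotProduct_comm, ← Matrix.dotProduct_mulVec]
    simp only [dotProduct_sub, dotProduct_smul, smul_eq_mul, e1]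
    ring
  -- assemble the conclusion
  set A : Fin (m+1) → ℝ := Avec R C ρ ys z with hAdef
  set B : Fin (n+1) → ℝ := Bvec R C ρ xs w with hBdef
  have hpair : ∀ i j, 0 ≤ (A i - xs ⬝ᵥ A) + (B j - ys ⬝ᵥ B) := by
    intro i j
    have := hqrow (i, j)
    have hGexp : ∑ k, q k * G (i, j) k
        = (A i - xs ⬝ᵥ A) + (B j - ys ⬝ᵥ B) := by
      calc ∑ k, q k * G (i, j) k
          = ∑ k, (q k * ((Pi.single i 1 - xs) ⬝ᵥ Acol k)
            + q k * ((Pi.single j 1 - ys) ⬝ᵥ Bcol k)) :=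
            Finset.sum_congr rfl fun k _ => by rw [hG]; ring
        _ = (∑ k, q k * ((Pi.single i 1 - xs) ⬝ᵥ Acol k))
            + ∑ k, q k * ((Pi.single j 1 - ys) ⬝ᵥ Bcol k) := Finset.sum_add_distrib
        _ = (Pi.single i 1 - xs) ⬝ᵥ A + (Pi.single j 1 - ys) ⬝ᵥ B := by
            rw [hAid, hBid, hAdef, hBdef]
        _ = (A i - xs ⬝ᵥ A) + (B j - ys ⬝ᵥ B) := by
            rw [sub_dotProduct, sub_dotProduct, single_dotProduct,
              single_dotProduct, one_mul, one_mul]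
    rw [hGexp] at this
    exact this
  have hAi : ∀ i, xs ⬝ᵥ A ≤ A i := by
    intro i
    have h6 : 0 ≤ ∑ j, ys j * ((A i - xs ⬝ᵥ A) + (B j - ys ⬝ᵥ B)) :=
      Finset.sum_nonneg fun j _ => mul_nonneg (hys.1 j) (hpair i j)
    have h7 : ∑ j, ys j * ((A i - xs ⬝ᵥ A) + (B j - ys ⬝ᵥ B)) = A i - xs ⬝ᵥ A := by
      calc ∑ j, ys j * ((A i - xs ⬝ᵥ A) + (B j - ys ⬝ᵥ B))
          = ∑ j, (ys j * (A i - xs ⬝ᵥ A) + (ys j * B j - ys j * (ys ⬝ᵥ B))) :=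
            Finset.sum_congr rfl fun j _ => by ring
        _ = (∑ j, ys j) * (A i - xs ⬝ᵥ A)
            + ((∑ j, ys j * B j) - (∑ j, ys j) * (ys ⬝ᵥ B)) := by
            rw [Finset.sum_add_distrib, Finset.sum_sub_distrib, Finset.sum_mul,
              Finset.sum_mul]
        _ = A i - xs ⬝ᵥ A := by
            rw [hys.2]
            have : ∑ j, ys j * B j = ys ⬝ᵥ B := rfl
            rw [this]
            ring
    linarith [h7 ▸ h6]
  have hBj : ∀ j, ys ⬝ᵥ B ≤ B j := by
    intro j
    have h6 : 0 ≤ ∑ i, xs i * ((A i - xs ⬝ᵥ A) + (B j - ys ⬝ᵥ B)) :=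
      Finset.sum_nonneg fun i _ => mul_nonneg (hxs.1 i) (hpair i j)
    have h7 : ∑ i, xs i * ((A i - xs ⬝ᵥ A) + (B j - ys ⬝ᵥ B)) = B j - ys ⬝ᵥ B := by
      calc ∑ i, xs i * ((A i - xs ⬝ᵥ A) + (B j - ys ⬝ᵥ B))
          = ∑ i, ((xs i * A i - xs i * (xs ⬝ᵥ A)) + xs i * (B j - ys ⬝ᵥ B)) :=
            Finset.sum_congr rfl fun i _ => by ring
        _ = ((∑ i, xs i * A i) - (∑ i, xs i) * (xs ⬝ᵥ A))
            + (∑ i, xs i) * (B j - ys ⬝ᵥ B) := by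
            rw [Finset.sum_add_distrib, Finset.sum_sub_distrib, Finset.sum_mul,
              Finset.sum_mul]
        _ = B j - ys ⬝ᵥ B := by
            rw [hxs.2]
            have : ∑ i, xs i * A i = xs ⬝ᵥ A := rfl
            rw [this]
            ring
    linarith [h7 ▸ h6]
  exact ⟨ρ, w, z, ⟨⟨hρ0, hρ1⟩, hwΔ, hwS, hzΔ, hzS⟩,
    supp_subset_suppmin hxs hAi, supp_subset_suppmin hys hBj⟩

/-- characterization of stationary points via the vectors `A` and `B`. -/
theorem stmt2 {m n : ℕ} (R C : Matrix (Fin (m+1)) (Fin (n+1)) ℝ)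
    (hR : ∀ i j, R i j ∈ Set.Icc (0:ℝ) 1) (hC : ∀ i j, C i j ∈ Set.Icc (0:ℝ) 1)
    (xs : Fin (m+1) → ℝ) (ys : Fin (n+1) → ℝ)
    (hxs : xs ∈ Δ (m+1)) (hys : ys ∈ Δ (n+1)) :
    IsStationary R C xs ys ↔
      (fR R xs ys = fC C xs ys ∧
        ∃ ρs ws zs, dualFeasible R C xs ys ρs ws zs ∧
          supp xs ⊆ suppmin (Avec R C ρs ys zs) ∧
          supp ys ⊆ suppmin (Bvec R C ρs xs ws)) := by
  constructor
  · intro hst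
    have hfeq := forward_feq R C xs ys hxs hys hst
    exact ⟨hfeq, forward_dual R C xs ys hxs hys hst hfeq⟩
  · rintro ⟨hfeq, ρs, ws, zs, hdf, hA, hB⟩
    exact backward_dir R C xs ys hxs hys hfeq ρs ws zs hdf hA hB

end TS
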